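/- Suppose a group Γ acts harmonically on a graph G. Then 2g(G) − 2 = |Γ|·(2g(G/Γ) − 2 + R), where R = Σ_{y ∈ V(G/Γ)} [2(1 − 1/r_y) + w_y] is the ramification number. -/

import Mathlib

open scoped Classical

/-- A finite connected multigraph without loop edges. -/
structure Multigraph where
  V : Type
  E : Type
  [fintypeV : Fintype V]
  [fintypeE : Fintype E]
  ends : E → Sym2 V
  loopless : ∀ e : E, ¬ (ends e).IsDiag
  connected : (SimpleGraph.fromRel fun x y : V => ∃ e : E, ends e = s(x, y)).Connected

attribute [instance] Multigraph.fintypeV Multigraph.fintypeE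

namespace Multigraph

/-- The genus (first Betti number, cyclomatic number) of a multigraph. -/
def genus (G : Multigraph) : ℤ :=
  (Fintype.card G.E : ℤ) - (Fintype.card G.V : ℤ) + 1

/-- A cycle in a multigraph, given as a nonempty set of edges such that every vertex is
incident to either 0 or 2 of its edges. -/
def IsCycleSet (G : Multigraph) (C : Set G.E) : Prop :=
  C.Nonempty ∧ ∀ x : G.V,
    Nat.card {e : G.E // e ∈ C ∧ x ∈ G.ends e} = 0 ∨
    Nat.card {e : G.E // e ∈ C ∧ x ∈ G.ends e} = 2

end Multigraph

/-- A morphism of multigraphs: vertices go to vertices, and each edge goes either to an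
edge joining the images of its endpoints, or to the common image of its endpoints
(in which case the edge is *vertical*). -/
structure Morphism (G G' : Multigraph) where
  vmap : G.V → G'.V
  emap : G.E → G'.E ⊕ G'.V
  compat : ∀ e : G.E,
    (∀ e', emap e = Sum.inl e' → G'.ends e' = (G.ends e).map vmap) ∧
    (∀ v, emap e = Sum.inr v → (G.ends e).map vmap = Sym2.diag v)

namespace Morphism

/-- A morphism is harmonic if for every vertex `x`, the number of edges incident to `x`
mapping to a given edge `e'` incident to `φ(x)` is independent of the choice of `e'`. -/
def Harmonic {G G' : Multigraph} (φ : Morphism G G') : Prop :=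
  ∀ (x : G.V) (e₁ e₂ : G'.E), φ.vmap x ∈ G'.ends e₁ → φ.vmap x ∈ G'.ends e₂ →
    Nat.card {e : G.E // x ∈ G.ends e ∧ φ.emap e = Sum.inl e₁} =
    Nat.card {e : G.E // x ∈ G.ends e ∧ φ.emap e = Sum.inl e₂}

/-- A morphism is nonconstant if its image is not a single vertex. -/
def Nonconstant {G G' : Multigraph} (φ : Morphism G G') : Prop :=
  ∃ x y : G.V, φ.vmap x ≠ φ.vmap y

/-- Composition of morphisms of multigraphs. -/
def comp {G₁ G₂ G₃ : Multigraph} (ψ : Morphism G₂ G₃) (φ : Morphism G₁ G₂) :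
    Morphism G₁ G₃ where
  vmap := ψ.vmap ∘ φ.vmap
  emap e := Sum.elim ψ.emap (fun v => Sum.inr (ψ.vmap v)) (φ.emap e)
  compat e := by
    constructor
    · intro e'' h
      rcases hφ : φ.emap e with e' | v
      · simp only [hφ, Sum.elim_inl] at h
        have h1 := (φ.compat e).1 e' hφ
        have h2 := (ψ.compat e').1 e'' h
        rw [h2, h1, Sym2.map_map]
      · simp only [hφ, Sum.elim_inr] at h
        simp at h
    · intro v h
      rcases hφ : φ.emap e with e' | v₀
      · simp only [hφ, Sum.elim_inl] at h
        have h1 := (φ.compat e).1 e' hφ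
        have h2 := (ψ.compat e').2 v h
        rw [← Sym2.map_map, ← h1]
        exact h2
      · simp only [hφ, Sum.elim_inr, Sum.inr.injEq] at h
        have h1 := (φ.compat e).2 v₀ hφ
        subst h
        rw [← Sym2.map_map, h1]
        rfl
end Morphism

/-- A group of automorphisms of a multigraph `G` (a faithful action of `Γ` on `G` by
automorphisms, i.e. a subgroup of `Aut(G)`). -/
structure GraphAction (Γ : Type) [Group Γ] (G : Multigraph) where
  actV : Γ →* Equiv.Perm G.V
  actE : Γ →* Equiv.Perm G.E
  ends_map : ∀ (γ : Γ) (e : G.E), G.ends (actE γ e) = (G.ends e).map (actV γ)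
  faithful : ∀ γ : Γ, (∀ x : G.V, actV γ x = x) → (∀ e : G.E, actE γ e = e) → γ = 1

namespace GraphAction

variable {Γ : Type} [Group Γ] {G : Multigraph}

/-- Two vertices lie in the same `Δ`-orbit. -/
def vrel (A : GraphAction Γ G) (Δ : Subgroup Γ) (x y : G.V) : Prop :=
  ∃ δ ∈ Δ, A.actV δ x = y

/-- Two edges lie in the same `Δ`-orbit. -/
def erel (A : GraphAction Γ G) (Δ : Subgroup Γ) (e f : G.E) : Prop :=
  ∃ δ ∈ Δ, A.actE δ e = f

/-- The setoid of `Δ`-orbits of vertices. -/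
def vSetoid (A : GraphAction Γ G) (Δ : Subgroup Γ) : Setoid G.V where
  r := A.vrel Δ
  iseqv := by
    constructor
    · intro x; exact ⟨1, Δ.one_mem, by simp⟩
    · rintro x y ⟨δ, hδ, h⟩
      refine ⟨δ⁻¹, Δ.inv_mem hδ, ?_⟩
      rw [map_inv, ← h]
      first | exact Equiv.symm_apply_apply _ _ | simp
    · rintro x y z ⟨δ₁, h1, e1⟩ ⟨δ₂, h2, e2⟩
      refine ⟨δ₂ * δ₁, Δ.mul_mem h2 h1, ?_⟩
      rw [map_mul]
      simp [Equiv.Perm.mul_apply, e1, e2]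

/-- The setoid of `Δ`-orbits of edges. -/
def eSetoid (A : GraphAction Γ G) (Δ : Subgroup Γ) : Setoid G.E where
  r := A.erel Δ
  iseqv := by
    constructor
    · intro e; exact ⟨1, Δ.one_mem, by simp⟩
    · rintro e f ⟨δ, hδ, h⟩
      refine ⟨δ⁻¹, Δ.inv_mem hδ, ?_⟩
      rw [map_inv, ← h]
      first | exact Equiv.symm_apply_apply _ _ | simp
    · rintro e f k ⟨δ₁, h1, e1⟩ ⟨δ₂, h2, e2⟩
      refine ⟨δ₂ * δ₁, Δ.mul_mem h2 h1, ?_⟩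
      rw [map_mul]
      simp [Equiv.Perm.mul_apply, e1, e2]

/-- An edge is `Δ`-vertical if its two endpoints lie in the same `Δ`-orbit (so it is
contracted by the quotient morphism `G → G/Δ`). -/
def Vertical (A : GraphAction Γ G) (Δ : Subgroup Γ) (e : G.E) : Prop :=
  ∃ x y : G.V, G.ends e = s(x, y) ∧ A.vrel Δ x y

/-- The vertex set of the quotient graph `G/Δ`: the `Δ`-orbits of vertices. -/
abbrev quotV (A : GraphAction Γ G) (Δ : Subgroup Γ) : Type :=
  Quotient (A.vSetoid Δ)

/-- The edge set of the quotient graph `G/Δ`: the `Δ`-orbits of non-vertical edges. -/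
abbrev quotE (A : GraphAction Γ G) (Δ : Subgroup Γ) : Type :=
  Quotient ((A.eSetoid Δ).comap (Subtype.val : {e : G.E // ¬ A.Vertical Δ e} → G.E))

/-- The genus of the quotient graph `G/Δ`. -/
noncomputable def quotGenus (A : GraphAction Γ G) (Δ : Subgroup Γ) : ℤ :=
  (Nat.card (A.quotE Δ) : ℤ) - (Nat.card (A.quotV Δ) : ℤ) + 1

/-- The order of the stabilizer `Δ_x` of a vertex `x`. -/
noncomputable def stabOrder (A : GraphAction Γ G) (Δ : Subgroup Γ) (x : G.V) : ℕ :=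
  Nat.card {γ : Γ // γ ∈ Δ ∧ A.actV γ x = x}

/-- The vertical multiplicity of a vertex `x`: the number of `Δ`-vertical edges
incident to `x`. -/
noncomputable def vertMult (A : GraphAction Γ G) (Δ : Subgroup Γ) (x : G.V) : ℕ :=
  Nat.card {e : G.E // x ∈ G.ends e ∧ A.Vertical Δ e}

/-- `r_y = |Δ_x|` for a vertex `y` of the quotient `G/Δ` and any `x` in the fiber over `y`. -/
noncomputable def r (A : GraphAction Γ G) (Δ : Subgroup Γ) (y : A.quotV Δ) : ℕ :=
  A.stabOrder Δ (Quotient.out y)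

/-- `w_y = v(x)/|Δ_x|` for a vertex `y` of the quotient `G/Δ` and any `x` in the fiber. -/
noncomputable def w (A : GraphAction Γ G) (Δ : Subgroup Γ) (y : A.quotV Δ) : ℕ :=
  A.vertMult Δ (Quotient.out y) / A.r Δ y

/-- The ramification number `R = Σ_y [2(1 - 1/r_y) + w_y]` of the quotient map `G → G/Δ`. -/
noncomputable def ram (A : GraphAction Γ G) (Δ : Subgroup Γ) : ℚ :=
  ∑ᶠ y : A.quotV Δ, (2 * (1 - 1 / (A.r Δ y : ℚ)) + (A.w Δ y : ℚ))

/-- A vertex `y` of the quotient `G/Δ` is a branch point if `2(1 - 1/r_y) + w_y > 0`. -/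
def IsBranch (A : GraphAction Γ G) (Δ : Subgroup Γ) (y : A.quotV Δ) : Prop :=
  0 < 2 * (1 - 1 / (A.r Δ y : ℚ)) + (A.w Δ y : ℚ)

/-- The quotient morphism `φ_Δ : G → G/Δ` is harmonic: for every vertex `x` of `G` and
every pair of quotient edges incident to the image of `x`, the numbers of preimages
incident to `x` agree. -/
def QuotHarmonic (A : GraphAction Γ G) (Δ : Subgroup Γ) : Prop :=
  ∀ (x : G.V) (e₁ e₂ : G.E), ¬ A.Vertical Δ e₁ → ¬ A.Vertical Δ e₂ →
    (∃ v ∈ G.ends e₁, A.vrel Δ x v) → (∃ v ∈ G.ends e₂, A.vrel Δ x v) →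
    Nat.card {e : G.E // x ∈ G.ends e ∧ A.erel Δ e e₁} =
    Nat.card {e : G.E // x ∈ G.ends e ∧ A.erel Δ e e₂}

/-- The quotient morphism `φ_Δ : G → G/Δ` is non-degenerate: no neighborhood `x(1)` is
contracted to a vertex, i.e. every vertex has a neighbor outside its `Δ`-orbit. -/
def QuotNondeg (A : GraphAction Γ G) (Δ : Subgroup Γ) : Prop :=
  ∀ x : G.V, ∃ e : G.E, x ∈ G.ends e ∧ ∃ y ∈ G.ends e, ¬ A.vrel Δ x y

/-- `Γ` acts harmonically on `G` if for every subgroup `Δ ≤ Γ` the quotient morphism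
`φ_Δ : G → G/Δ` is harmonic and non-degenerate. -/
def ActsHarmonically (A : GraphAction Γ G) : Prop :=
  ∀ Δ : Subgroup Γ, A.QuotHarmonic Δ ∧ A.QuotNondeg Δ

/-- The quotient map `G → G/Δ` is horizontally unramified: all vertex stabilizers in `Δ`
are trivial. -/
def HorizUnramified (A : GraphAction Γ G) (Δ : Subgroup Γ) : Prop :=
  ∀ (x : G.V) (γ : Γ), γ ∈ Δ → A.actV γ x = x → γ = 1

end GraphAction

/-- `M g` is the maximal order of a group acting harmonically on a graph of genus `g`. -/
noncomputable def M (g : ℕ) : ℕ :=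
  sSup {n : ℕ | ∃ (Γ : Type) (i : Group Γ) (G : Multigraph) (A : @GraphAction Γ i G),
    @GraphAction.ActsHarmonically Γ i G A ∧ G.genus = (g : ℤ) ∧ Nat.card Γ = n}

/-!
Harmonicity makes the action rigid: if `γ` fixes a vertex `z` and an edge at `z`, harmonicity of
`G → G/⟨γ⟩` at `z` forces `γ` to fix every edge at `z`, and by connectedness `γ` fixes all of `G`,
so `γ = 1`. Consequently `Γ` acts freely on the non-vertical edges, whence
`|E(G)| = |Γ|·|E(G/Γ)| + #vertical edges`, and the stabilizer `Γ_x` acts freely on the `v(x)`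
vertical edges at `x`, whence `r_y ∣ v(x)`. By orbit–stabilizer the fiber over `y` has `|Γ|/r_y`
vertices, so counting vertical edges through their endpoints gives
`2·#vertical edges = Σ_y (|Γ|/r_y)·v = |Γ|·Σ_y w_y`. Substituting into `2g(G) - 2 = 2|E| - 2|V|`
gives the formula.
-/

section OrbitCounting

variable {H S : Type} [Group H] (act : H →* Equiv.Perm S) {s : Setoid S}

theorem card_fiber_mul_card_fixing (hs : ∀ a b, s a b ↔ ∃ γ, act γ a = b) (q : Quotient s) :
    Nat.card {x // Quotient.mk s x = q} * Nat.card {γ // act γ q.out = q.out} = Nat.card H := by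
  let := MulAction.compHom S act
  have hfiber : {x // Quotient.mk s x = q} ≃ MulAction.orbit H q.out :=
    Equiv.subtypeEquivRight fun x => by
      rw [← q.out_eq, Quotient.eq, q.out_eq, hs]
      constructor
      · rintro ⟨γ, hγ⟩
        exact ⟨γ⁻¹, by rw [← hγ]; exact inv_smul_smul γ x⟩
      · rintro ⟨γ, hγ⟩
        exact ⟨γ⁻¹, by rw [← hγ]; exact inv_smul_smul γ q.out⟩
  rw [Nat.card_congr hfiber, Nat.card_congr (MulAction.orbitEquivQuotientStabilizer H q.out),
    mul_comm]
  exact (MulAction.stabilizer H q.out).card_mul_index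

theorem card_eq_card_quotient_mul_card_of_free [Finite S] (hs : ∀ a b, s a b ↔ ∃ γ, act γ a = b)
    (hfree : ∀ γ x, act γ x = x → γ = 1) :
    Nat.card S = Nat.card (Quotient s) * Nat.card H := by
  have hfixing (q : Quotient s) : Nat.card {γ // act γ q.out = q.out} = 1 :=
    Nat.card_eq_one_iff_unique.mpr
      ⟨⟨fun a b => Subtype.ext ((hfree _ _ a.2).trans (hfree _ _ b.2).symm)⟩, ⟨⟨1, by simp⟩⟩⟩
  have hfiber (q : Quotient s) : Nat.card {x // Quotient.mk s x = q} = Nat.card H := by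
    simpa [hfixing] using card_fiber_mul_card_fixing act hs q
  have := Fintype.ofFinite (Quotient s)
  rw [← Nat.card_congr (Equiv.sigmaFiberEquiv (Quotient.mk s)), Nat.card_sigma]
  simp [hfiber, Nat.card_eq_fintype_card]

end OrbitCounting

def MonoidHom.restrictPerm {H S : Type} [Group H] (act : H →* Equiv.Perm S) (p : S → Prop)
    (hp : ∀ γ x, p (act γ x) ↔ p x) : H →* Equiv.Perm {x // p x} where
  toFun γ := (act γ).subtypePerm (hp γ)
  map_one' := by ext; simp
  map_mul' γ δ := by
    ext x
    change act (γ * δ) x = act γ (act δ x)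
    rw [map_mul, Equiv.Perm.mul_apply]

namespace Multigraph

variable (G : Multigraph)

theorem exists_ends_eq (e : G.E) : ∃ a b, G.ends e = s(a, b) := by
  induction G.ends e using Sym2.ind with
  | h a b => exact ⟨a, b, rfl⟩

theorem sum_card_incident (P : G.E → Prop) :
    ∑ x, Nat.card {e // x ∈ G.ends e ∧ P e} = 2 * Nat.card {e // P e} := by
  have key := Finset.sum_card_bipartiteAbove_eq_sum_card_bipartiteBelow (s := Finset.univ)
    (t := Finset.univ) (r := fun x e => x ∈ G.ends e ∧ P e)
  simp only [Finset.bipartiteAbove, Finset.bipartiteBelow] at key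
  simp only [Nat.card_eq_fintype_card, Fintype.card_subtype, key]
  rw [Finset.card_filter, Finset.mul_sum]
  refine Finset.sum_congr rfl fun e _ => ?_
  split_ifs with he
  · simpa [← Sym2.mem_toFinset, he] using Sym2.card_toFinset_of_not_isDiag _ (G.loopless e)
  · simp [he]

theorem forall_of_forall_ends {p : G.V → Prop} (hstep : ∀ e x y, G.ends e = s(x, y) → p x → p y)
    {x : G.V} (hx : p x) (y : G.V) : p y := by
  obtain ⟨walk⟩ := G.connected.preconnected x y
  induction walk with
  | nil => exact hx
  | cons hadj _ ih =>
    apply ih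
    obtain ⟨-, ⟨e, he⟩ | ⟨e, he⟩⟩ := hadj
    · exact hstep e _ _ he hx
    · exact hstep e _ _ (he.trans Sym2.eq_swap) hx

end Multigraph

namespace GraphAction

variable {Γ : Type} [Group Γ] {G : Multigraph} (A : GraphAction Γ G)

theorem mem_ends_actE_iff (γ : Γ) (x : G.V) (e : G.E) :
    A.actV γ x ∈ G.ends (A.actE γ e) ↔ x ∈ G.ends e := by
  rw [A.ends_map, Sym2.mem_map]
  exact ⟨fun ⟨a, ha, hax⟩ => (A.actV γ).injective hax ▸ ha, fun h => ⟨x, h, rfl⟩⟩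

theorem actV_inv_apply_of_apply_eq {γ : Γ} {x y : G.V} (h : A.actV γ x = y) :
    A.actV γ⁻¹ y = x := by
  rw [map_inv, Equiv.Perm.inv_eq_iff_eq, h]

theorem actE_inv_apply_of_apply_eq {γ : Γ} {e f : G.E} (h : A.actE γ e = f) :
    A.actE γ⁻¹ f = e := by
  rw [map_inv, Equiv.Perm.inv_eq_iff_eq, h]

theorem finite (A : GraphAction Γ G) : Finite Γ := by
  refine Finite.of_injective (A.actV.prod A.actE) ((injective_iff_map_eq_one _).mpr fun γ h => ?_)
  obtain ⟨hV, hE⟩ := Prod.ext_iff.mp h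
  exact A.faithful γ (fun x => by simp_all) (fun e => by simp_all)

theorem not_vertical_of_forall_fix {Δ : Subgroup Γ} {z : G.V} (hz : ∀ δ ∈ Δ, A.actV δ z = z)
    {e : G.E} (hze : z ∈ G.ends e) : ¬ A.Vertical Δ e := by
  rintro ⟨a, b, hab, δ, hδ, hba⟩
  apply G.loopless e
  rw [hab, Sym2.mk_isDiag_iff]
  rw [hab, Sym2.mem_iff] at hze
  rcases hze with rfl | rfl
  · rw [← hba, hz δ hδ]
  · rw [← A.actV_inv_apply_of_apply_eq hba, hz _ (Δ.inv_mem hδ)]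

/-- The harmonic-action hypothesis enters through the quotient by `⟨γ⟩`: the fiber over the
image of `h` at `z` is just `{h}`, so the fiber over the image of `f` has one element, while it
contains both `f` and `A.actE γ f`. -/
theorem actE_eq_self_of_fix (hA : A.ActsHarmonically) {γ : Γ} {z : G.V} {h : G.E}
    (hz : A.actV γ z = z) (hzh : z ∈ G.ends h) (hh : A.actE γ h = h)
    {f : G.E} (hzf : z ∈ G.ends f) : A.actE γ f = f := by
  set Δ := Subgroup.zpowers γ
  have hfixV : ∀ δ ∈ Δ, A.actV δ z = z := by
    rintro _ ⟨n, rfl⟩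
    simp only [map_zpow, Equiv.Perm.zpow_apply_eq_self_of_apply_eq_self hz]
  have hfixE : ∀ δ ∈ Δ, A.actE δ h = h := by
    rintro _ ⟨n, rfl⟩
    simp only [map_zpow, Equiv.Perm.zpow_apply_eq_self_of_apply_eq_self hh]
  have hrefl : ∀ e, A.erel Δ e e := fun e => ⟨1, Δ.one_mem, by simp⟩
  have harmonic := (hA Δ).1 z h f (A.not_vertical_of_forall_fix hfixV hzh)
    (A.not_vertical_of_forall_fix hfixV hzf) ⟨z, hzh, 1, Δ.one_mem, by simp⟩
    ⟨z, hzf, 1, Δ.one_mem, by simp⟩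
  have horbit_h : ∀ e, A.erel Δ e h → e = h := fun e ⟨δ, hδ, he⟩ =>
    (A.actE δ).injective (he.trans (hfixE δ hδ).symm)
  have hfiber_h : Nat.card {e // z ∈ G.ends e ∧ A.erel Δ e h} = 1 :=
    Nat.card_eq_one_iff_unique.mpr ⟨⟨fun a b => Subtype.ext
      ((horbit_h _ a.2.2).trans (horbit_h _ b.2.2).symm)⟩, ⟨⟨h, hzh, hrefl h⟩⟩⟩
  have hsub := (Nat.card_eq_one_iff_unique.mp (harmonic.symm.trans hfiber_h)).1
  have hγf : z ∈ G.ends (A.actE γ f) := hz ▸ (A.mem_ends_actE_iff γ z f).mpr hzf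
  exact congrArg Subtype.val (hsub.elim ⟨_, hγf, γ⁻¹, Δ.inv_mem (Subgroup.mem_zpowers γ),
    A.actE_inv_apply_of_apply_eq rfl⟩ ⟨f, hzf, hrefl f⟩)

theorem eq_one_of_fix (hA : A.ActsHarmonically) {γ : Γ} {x : G.V} {e : G.E}
    (hx : A.actV γ x = x) (hxe : x ∈ G.ends e) (he : A.actE γ e = e) : γ = 1 := by
  let P z := A.actV γ z = z ∧ ∀ f, z ∈ G.ends f → A.actE γ f = f
  have hP : ∀ z, P z := by
    refine G.forall_of_forall_ends (fun f a b hf ⟨ha, hfa⟩ => ?_)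
      ⟨hx, fun _ => A.actE_eq_self_of_fix hA hx hxe he⟩
    have hbf : b ∈ G.ends f := hf ▸ Sym2.mem_mk_right a b
    have hfix : A.actE γ f = f := hfa f (hf ▸ Sym2.mem_mk_left a b)
    have hb : A.actV γ b = b := by
      have := (A.mem_ends_actE_iff γ b f).mpr hbf
      rw [hfix, hf, Sym2.mem_iff] at this
      refine this.resolve_left fun hba => G.loopless f ?_
      rw [hf, Sym2.mk_isDiag_iff]
      exact ((A.actV γ).injective (hba.trans ha.symm)).symm
    exact ⟨hb, fun _ => A.actE_eq_self_of_fix hA hb hbf hfix⟩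
  refine A.faithful γ (fun z => (hP z).1) fun f => ?_
  obtain ⟨a, b, hf⟩ := G.exists_ends_eq f
  exact (hP a).2 f (hf ▸ Sym2.mem_mk_left a b)

theorem eq_one_of_actE_eq_of_not_vertical (hA : A.ActsHarmonically) {γ : Γ} {e : G.E}
    (hev : ¬ A.Vertical ⊤ e) (he : A.actE γ e = e) : γ = 1 := by
  obtain ⟨a, b, hab⟩ := G.exists_ends_eq e
  have hmap : s(A.actV γ a, A.actV γ b) = s(a, b) := by
    rw [← Sym2.map_mk, ← hab, ← A.ends_map, he]
  rcases Sym2.eq_iff.mp hmap with ⟨ha, -⟩ | ⟨ha, -⟩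
  · exact A.eq_one_of_fix hA ha (hab ▸ Sym2.mem_mk_left a b) he
  · exact absurd ⟨a, b, hab, γ, Subgroup.mem_top γ, ha⟩ hev

def vertexStabilizer (x : G.V) : Subgroup Γ :=
  (MulAction.stabilizer (Equiv.Perm G.V) x).comap A.actV

@[simp]
theorem mem_vertexStabilizer {x : G.V} {γ : Γ} : γ ∈ A.vertexStabilizer x ↔ A.actV γ x = x :=
  Iff.rfl

theorem card_edges_eq_card_quotient_mul_card_of_free (Δ : Subgroup Γ) (p : G.E → Prop)
    (hp : ∀ δ ∈ Δ, ∀ e, p (A.actE δ e) ↔ p e)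
    (hfree : ∀ δ ∈ Δ, ∀ e, p e → A.actE δ e = e → δ = 1) :
    Nat.card {e // p e} =
      Nat.card (Quotient ((A.eSetoid Δ).comap (Subtype.val : {e // p e} → G.E))) *
        Nat.card Δ := by
  refine card_eq_card_quotient_mul_card_of_free
    ((A.actE.comp Δ.subtype).restrictPerm p fun δ => hp δ δ.2) (fun a b => ?_)
    fun δ e he => Subtype.ext (hfree δ δ.2 e e.2 (congrArg Subtype.val he))
  simp only [Setoid.comap_rel, Subtype.ext_iff]
  exact ⟨fun ⟨δ, hδ, h⟩ => ⟨⟨δ, hδ⟩, h⟩, fun ⟨δ, h⟩ => ⟨δ, δ.2, h⟩⟩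

theorem vertical_actE_iff (γ : Γ) (e : G.E) : A.Vertical ⊤ (A.actE γ e) ↔ A.Vertical ⊤ e := by
  suffices h : ∀ γ e, A.Vertical ⊤ e → A.Vertical ⊤ (A.actE γ e) from
    ⟨fun he => by simpa only [A.actE_inv_apply_of_apply_eq rfl] using h γ⁻¹ _ he, h γ e⟩
  rintro γ e ⟨a, b, hab, δ, -, hba⟩
  refine ⟨A.actV γ a, A.actV γ b, by rw [A.ends_map, hab, Sym2.map_mk], γ * δ * γ⁻¹,
    Subgroup.mem_top _, ?_⟩
  rw [map_mul, map_mul, Equiv.Perm.mul_apply, Equiv.Perm.mul_apply,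
    A.actV_inv_apply_of_apply_eq rfl, hba]

theorem card_nonvertical (hA : A.ActsHarmonically) :
    Nat.card {e // ¬ A.Vertical ⊤ e} = Nat.card (A.quotE ⊤) * Nat.card Γ := by
  rw [← Subgroup.card_top (G := Γ)]
  exact A.card_edges_eq_card_quotient_mul_card_of_free ⊤ _
    (fun γ _ e => not_congr (A.vertical_actE_iff γ e))
    fun γ _ e he hfix => A.eq_one_of_actE_eq_of_not_vertical hA he hfix

theorem stabOrder_dvd_vertMult (hA : A.ActsHarmonically) (x : G.V) :
    A.stabOrder ⊤ x ∣ A.vertMult ⊤ x := by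
  have hstab : A.stabOrder ⊤ x = Nat.card (A.vertexStabilizer x) :=
    Nat.card_congr (Equiv.subtypeEquivRight fun γ => by simp)
  rw [hstab, vertMult, A.card_edges_eq_card_quotient_mul_card_of_free (A.vertexStabilizer x)]
  · exact dvd_mul_left _ _
  · intro δ hδ e
    rw [A.vertical_actE_iff, ← A.mem_ends_actE_iff δ x e, (A.mem_vertexStabilizer).mp hδ]
  · exact fun δ hδ e he hfix => A.eq_one_of_fix hA ((A.mem_vertexStabilizer).mp hδ) he.1 hfix

theorem vertMult_actV (γ : Γ) (x : G.V) : A.vertMult ⊤ (A.actV γ x) = A.vertMult ⊤ x :=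
  Nat.card_congr (Equiv.subtypeEquiv (A.actE γ) fun e => by
    rw [A.mem_ends_actE_iff, A.vertical_actE_iff]).symm

theorem card_fiber_mul_r (q : A.quotV ⊤) :
    Nat.card {x // Quotient.mk (A.vSetoid ⊤) x = q} * A.r ⊤ q = Nat.card Γ := by
  have hr : A.r ⊤ q = Nat.card {γ // A.actV γ q.out = q.out} :=
    Nat.card_congr (Equiv.subtypeEquivRight fun γ => by simp)
  rw [hr]
  exact card_fiber_mul_card_fixing A.actV (s := A.vSetoid ⊤)
    (fun a b => ⟨fun ⟨γ, _, h⟩ => ⟨γ, h⟩, fun ⟨γ, h⟩ => ⟨γ, Subgroup.mem_top γ, h⟩⟩) q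

theorem r_pos (q : A.quotV ⊤) : 0 < A.r ⊤ q := by
  have := A.finite
  exact Nat.pos_of_ne_zero fun h => Nat.card_pos.ne' (h ▸ A.card_fiber_mul_r q).symm

theorem sum_eq_card_mul_sum_div_r (f : G.V → ℚ) (hf : ∀ γ x, f (A.actV γ x) = f x) :
    ∑ x, f x = Nat.card Γ * ∑ q : A.quotV ⊤, f q.out / A.r ⊤ q := by
  rw [← Fintype.sum_fiberwise (Quotient.mk (A.vSetoid ⊤)) f, Finset.mul_sum]
  refine Finset.sum_congr rfl fun q _ => ?_
  have hconst (x : {x // Quotient.mk (A.vSetoid ⊤) x = q}) : f x = f q.out := by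
    obtain ⟨γ, -, hγ⟩ := Quotient.exact (x.2.trans q.out_eq.symm)
    rw [← hγ, hf]
  have hr : (A.r ⊤ q : ℚ) ≠ 0 := Nat.cast_ne_zero.mpr (A.r_pos q).ne'
  rw [Finset.sum_congr rfl fun x _ => hconst x, Finset.sum_const, Finset.card_univ,
    nsmul_eq_mul, ← Nat.card_eq_fintype_card, ← A.card_fiber_mul_r q]
  field_simp
  push_cast
  ring

theorem card_V_eq_card_mul_sum_one_div_r :
    (Fintype.card G.V : ℚ) = Nat.card Γ * ∑ q : A.quotV ⊤, 1 / (A.r ⊤ q : ℚ) := by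
  simpa using A.sum_eq_card_mul_sum_div_r (fun _ => 1) fun _ _ => rfl

theorem two_mul_card_vertical_eq_card_mul_sum_w (hA : A.ActsHarmonically) :
    2 * (Nat.card {e // A.Vertical ⊤ e} : ℚ) = Nat.card Γ * ∑ q : A.quotV ⊤, (A.w ⊤ q : ℚ) := by
  have hw (q : A.quotV ⊤) : (A.w ⊤ q : ℚ) = A.vertMult ⊤ q.out / A.r ⊤ q :=
    Nat.cast_div (A.stabOrder_dvd_vertMult hA q.out) (Nat.cast_ne_zero.mpr (A.r_pos q).ne')
  simp only [hw]
  rw [← A.sum_eq_card_mul_sum_div_r (fun x => (A.vertMult ⊤ x : ℚ)) fun γ x => by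
    rw [A.vertMult_actV]]
  exact_mod_cast (G.sum_card_incident (A.Vertical ⊤)).symm

theorem card_E_eq_card_quotE_mul_add_card_vertical (hA : A.ActsHarmonically) :
    Fintype.card G.E = Nat.card (A.quotE ⊤) * Nat.card Γ + Nat.card {e // A.Vertical ⊤ e} := by
  rw [← A.card_nonvertical hA, ← Nat.card_eq_fintype_card, add_comm, ← Nat.card_sum]
  exact Nat.card_congr (Equiv.sumCompl _).symm

end GraphAction

/-- Riemann–Hurwitz. If `Γ` acts harmonically on `G`, then
`2g(G) − 2 = |Γ|·(2g(G/Γ) − 2 + R)`. -/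
theorem riemann_hurwitz {Γ : Type} [Group Γ] {G : Multigraph} (A : GraphAction Γ G)
    (hA : A.ActsHarmonically) :
    2 * (G.genus : ℚ) - 2 =
      (Nat.card Γ : ℚ) * (2 * (A.quotGenus ⊤ : ℚ) - 2 + A.ram ⊤) := by
  have hE : (Fintype.card G.E : ℚ) =
      Nat.card (A.quotE ⊤) * Nat.card Γ + Nat.card {e // A.Vertical ⊤ e} := by
    exact_mod_cast A.card_E_eq_card_quotE_mul_add_card_vertical hA
  have hram : A.ram ⊤ = 2 * Nat.card (A.quotV ⊤) - 2 * ∑ q : A.quotV ⊤, 1 / (A.r ⊤ q : ℚ) +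
      ∑ q : A.quotV ⊤, (A.w ⊤ q : ℚ) := by
    simp only [GraphAction.ram, finsum_eq_sum_of_fintype, Finset.sum_add_distrib, mul_sub,
      Finset.sum_sub_distrib, ← Finset.mul_sum, mul_one, Finset.sum_const, Finset.card_univ,
      nsmul_eq_mul, Nat.card_eq_fintype_card]
    ring
  rw [Multigraph.genus, GraphAction.quotGenus, hram]
  push_cast
  linear_combination 2 * hE + A.two_mul_card_vertical_eq_card_mul_sum_w hA -
    2 * A.card_V_eq_card_mul_sum_one_div_r
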